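/- For each j ∈ {1,2,3} and on the domain ℝ × B, the pair of functions φ₁(τ,ξ) := e^τ, φ₂(τ,ξ) := 2e^τ and, separately, the pair φ₁(τ,ξ) := ξ^j, φ₂(τ,ξ) := 2ξ^j each solve the linearized system ∂_τ φ₁ = −ξ^k ∂_{ξ^k} φ₁ − φ₁ + φ₂ and ∂_τ φ₂ = ∂_{ξ^k}∂^{ξ_k} φ₁ − ξ^k ∂_{ξ^k} φ₂ − 2φ₂ + 6φ₁. Consequently (1,2) is an eigenfunction of the linearized generator with eigenvalue 1 and (ξ^j, 2ξ^j), j = 1,2,3, are eigenfunctions with eigenvalue 0. -/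

import Mathlib

noncomputable section

/-- Similarity coordinates space `ℝ × ℝ³` (points `(τ,ξ)`). -/
abbrev Spc : Type := ℝ × EuclideanSpace ℝ (Fin 3)

/-- Directional derivative in the direction `w`. -/
noncomputable def dirDeriv (w : Spc) (v : Spc → ℝ) (p : Spc) : ℝ := fderiv ℝ v p w

/-- Time direction `∂_τ`. -/
noncomputable def e0 : Spc := (1, 0)

/-- Spatial coordinate directions `∂_{ξ^j}`. -/
noncomputable def es (j : Fin 3) : Spc := (0, EuclideanSpace.single j 1)

/-- Spatial Laplacian `∂_{ξ^k}∂^{ξ_k}`. -/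
noncomputable def lap (v : Spc → ℝ) (p : Spc) : ℝ :=
  ∑ k : Fin 3, dirDeriv (es k) (dirDeriv (es k) v) p

/-- A pair `(φ₁,φ₂)` solves the linearized system
`∂_τφ₁ = -ξ^k∂_kφ₁ - φ₁ + φ₂`, `∂_τφ₂ = Δφ₁ - ξ^k∂_kφ₂ - 2φ₂ + 6φ₁` on `ℝ × B`. -/
def SolvesLin (φ₁ φ₂ : Spc → ℝ) : Prop :=
  ∀ p : Spc, ‖p.2‖ < 1 →
    dirDeriv e0 φ₁ p =
      -(∑ k : Fin 3, p.2 k * dirDeriv (es k) φ₁ p) - φ₁ p + φ₂ p ∧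
    dirDeriv e0 φ₂ p =
      lap φ₁ p - (∑ k : Fin 3, p.2 k * dirDeriv (es k) φ₂ p) - 2 * φ₂ p + 6 * φ₁ p

/-! For a pair of the form `(φ, 2φ)` the second equation is twice the first plus `Δφ = 0`, so
the system reduces to `∂_τ φ + ξ^k ∂_{ξ^k} φ = φ` together with harmonicity of `φ`. The function
`e^τ` satisfies the first equation through its `τ`-derivative and `ξ^j` through its homogeneity
of degree one in `ξ`; both are affine in `ξ`, hence harmonic. -/

@[simp] lemma e0_fst : e0.1 = 1 := rfl

@[simp] lemma e0_snd : e0.2 = 0 := rfl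

@[simp] lemma es_fst (k : Fin 3) : (es k).1 = 0 := rfl

@[simp] lemma es_snd_apply (k j : Fin 3) : (es k).2 j = if j = k then 1 else 0 := by
  simp [es, PiLp.single_apply]

lemma dirDeriv_const_mul (w : Spc) (c : ℝ) (v : Spc → ℝ) (p : Spc) :
    dirDeriv w (fun q => c * v q) p = c * dirDeriv w v p :=
  congrFun (congrArg DFunLike.coe (congrFun (fderiv_const_smul_field (f := v) c) p)) w

lemma dirDeriv_const (w : Spc) (c : ℝ) : dirDeriv w (fun _ => c) = fun _ => 0 := by
  funext p
  simp [dirDeriv]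

lemma dirDeriv_exp_fst (w p : Spc) :
    dirDeriv w (fun q => Real.exp q.1) p = Real.exp p.1 * w.1 := by
  rw [dirDeriv, (hasFDerivAt_fst.exp).fderiv]
  simp [mul_comm]

lemma dirDeriv_snd_apply (w p : Spc) (j : Fin 3) : dirDeriv w (fun q => q.2 j) p = w.2 j := by
  have h : HasFDerivAt (fun q : Spc => q.2 j)
      ((EuclideanSpace.proj j).comp (ContinuousLinearMap.snd ℝ ℝ _)) p :=
    ((EuclideanSpace.proj j).comp (ContinuousLinearMap.snd ℝ ℝ _)).hasFDerivAt
  rw [dirDeriv, h.fderiv]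
  rfl

lemma lap_eq_zero_of_dirDeriv_const {v : Spc → ℝ} (h : ∀ k, ∃ c, dirDeriv (es k) v = fun _ => c)
    (p : Spc) : lap v p = 0 := by
  refine Finset.sum_eq_zero fun k _ => ?_
  obtain ⟨c, hc⟩ := h k
  rw [hc, dirDeriv_const]

theorem solvesLin_two_mul {φ : Spc → ℝ}
    (hφ : ∀ p : Spc, ‖p.2‖ < 1 → dirDeriv e0 φ p + ∑ k, p.2 k * dirDeriv (es k) φ p = φ p)
    (hΔ : ∀ p : Spc, ‖p.2‖ < 1 → lap φ p = 0) :
    SolvesLin φ (fun q => 2 * φ q) := by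
  intro p hp
  simp only [dirDeriv_const_mul, mul_left_comm _ (2 : ℝ), ← Finset.mul_sum]
  exact ⟨by linear_combination hφ p hp, by linear_combination 2 * hφ p hp - hΔ p hp⟩

/-- The pairs `(e^τ, 2e^τ)` (eigenvalue `1`, from time translation) and
`(ξ^j, 2ξ^j)`, `j = 1,2,3` (eigenvalue `0`, from Lorentz boosts) solve the
linearized system on `ℝ × B`. -/
theorem stmt16 :
    SolvesLin (fun q : Spc => Real.exp q.1) (fun q : Spc => 2 * Real.exp q.1) ∧
    ∀ j : Fin 3, SolvesLin (fun q : Spc => q.2 j) (fun q : Spc => 2 * q.2 j) := by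
  refine ⟨solvesLin_two_mul (fun p _ => ?_) (fun p _ => ?_),
    fun j => solvesLin_two_mul (fun p _ => ?_) (fun p _ => ?_)⟩
  · simp [dirDeriv_exp_fst]
  · exact lap_eq_zero_of_dirDeriv_const
      (fun k => ⟨0, funext fun q => by simp [dirDeriv_exp_fst]⟩) p
  · simp [dirDeriv_snd_apply]
  · exact lap_eq_zero_of_dirDeriv_const (fun k => ⟨_, funext fun q => dirDeriv_snd_apply _ q j⟩) p
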